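/- arXiv:1708.06065 — 8 statements merged into one kernel-verified Lean document; each statement's English description precedes it below -/
import Mathlib

section
/- Suppose A_ff is invertible, let P_ideal be the interpolation operator with F-block W := -A_ff⁻¹ * A_fc, let R = [Z, I] for arbitrary Z : Matrix C F ℝ, and suppose the Schur complement S := A_cc - A_cf * A_ff⁻¹ * A_fc (which equals K := R*A*P_ideal) is invertible. Then the residual-propagation operator of coarse-grid correction satisfies I - A*P_ideal*K⁻¹*R = fromBlocks I 0 (-Z) 0; equivalently, for every residual vector r with F-part r_f and C-part r_c, the propagated residual has F-part r_f and C-part -Z*r_f. -/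
/-!
Ideal interpolation is built so that `A * P_ideal` vanishes on the F-rows and equals the Schur
complement `S` on the C-rows. Hence `K = R * A * P_ideal = S`, and `A * P_ideal * K⁻¹ * R` is
`fromRows 0 1 * fromCols Z 1 = fromBlocks 0 0 Z 1`, whose complement in the identity is
`fromBlocks 1 0 (-Z) 0`.
-/

open Matrix

section BlockAlgebra

variable {F C α : Type*} [CommRing α]

/- Constant blocks `0`, `1` carry type ascriptions: left to unification, `*` between these blocks
picks up the `CStarMatrix` multiplication instance and the `rw`s below no longer match. -/
theorem fromBlocks_mul_fromRows_neg_inv_mul_one [Fintype F] [Fintype C] [DecidableEq F]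
    [DecidableEq C] (A_ff : Matrix F F α) (A_fc : Matrix F C α) (A_cf : Matrix C F α)
    (A_cc : Matrix C C α) (hAff : IsUnit A_ff.det) :
    fromBlocks A_ff A_fc A_cf A_cc * fromRows (-(A_ff⁻¹ * A_fc)) (1 : Matrix C C α)
      = fromRows 0 (A_cc - A_cf * A_ff⁻¹ * A_fc) := by
  rw [fromBlocks_mul_fromRows, Matrix.mul_neg, mul_nonsing_inv_cancel_left _ _ hAff,
    Matrix.mul_neg, Matrix.mul_one, Matrix.mul_one, ← Matrix.mul_assoc, neg_add_cancel,
    sub_eq_neg_add]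

theorem fromCols_one_mul_fromRows_zero [Fintype F] [Fintype C] [DecidableEq C]
    (Z : Matrix C F α) (S : Matrix C C α) :
    fromCols Z (1 : Matrix C C α) * fromRows (0 : Matrix F C α) S = S := by
  rw [fromCols_mul_fromRows, Matrix.mul_zero, Matrix.one_mul, zero_add]

theorem one_sub_fromRows_zero_mul_inv_mul_fromCols_one [Fintype C] [DecidableEq F]
    [DecidableEq C] (Z : Matrix C F α) (S : Matrix C C α) (hS : IsUnit S.det) :
    (1 : Matrix (F ⊕ C) (F ⊕ C) α) - fromRows (0 : Matrix F C α) S * S⁻¹ * fromCols Z 1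
      = fromBlocks (1 : Matrix F F α) 0 (-Z) 0 := by
  rw [fromRows_mul, Matrix.zero_mul, mul_nonsing_inv _ hS, fromRows_mul_fromCols,
    Matrix.zero_mul, Matrix.zero_mul, Matrix.one_mul, Matrix.one_mul, ← fromBlocks_one,
    sub_eq_add_neg, fromBlocks_neg, fromBlocks_add]
  simp only [neg_zero, add_zero, zero_add, add_neg_cancel]

theorem fromBlocks_one_zero_neg_zero_mulVec [Fintype F] [Fintype C] [DecidableEq F]
    (Z : Matrix C F α) (r : F ⊕ C → α) :
    fromBlocks (1 : Matrix F F α) 0 (-Z) 0 *ᵥ r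
      = Sum.elim (fun f => r (Sum.inl f)) (-(Z *ᵥ fun f => r (Sum.inl f))) := by
  rw [fromBlocks_mulVec]
  simp only [one_mulVec, zero_mulVec, add_zero, neg_mulVec]
  rfl

end BlockAlgebra

theorem residual_propagation_ideal_interpolation_general
    {F C : Type*} [Fintype F] [Fintype C] [DecidableEq F] [DecidableEq C]
    (A_ff : Matrix F F ℝ) (A_fc : Matrix F C ℝ) (A_cf : Matrix C F ℝ) (A_cc : Matrix C C ℝ)
    (Z : Matrix C F ℝ)
    (A : Matrix (F ⊕ C) (F ⊕ C) ℝ) (hA : A = fromBlocks A_ff A_fc A_cf A_cc)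
    (hAff : IsUnit A_ff.det)
    (P_ideal : Matrix (F ⊕ C) C ℝ)
    (hP : P_ideal = fromRows (-(A_ff⁻¹ * A_fc)) (1 : Matrix C C ℝ))
    (R : Matrix C (F ⊕ C) ℝ) (hR : R = fromCols Z (1 : Matrix C C ℝ))
    (S : Matrix C C ℝ) (hS : S = A_cc - A_cf * A_ff⁻¹ * A_fc) (hSinv : IsUnit S.det)
    (K : Matrix C C ℝ) (hK : K = R * A * P_ideal) :
    K = S ∧
    (1 : Matrix (F ⊕ C) (F ⊕ C) ℝ) - A * P_ideal * K⁻¹ * R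
        = fromBlocks (1 : Matrix F F ℝ) 0 (-Z) 0 ∧
    ∀ r : (F ⊕ C) → ℝ,
      (∀ f : F, (((1 : Matrix (F ⊕ C) (F ⊕ C) ℝ) - A * P_ideal * K⁻¹ * R).mulVec r)
          (Sum.inl f) = r (Sum.inl f)) ∧
      (∀ c : C, (((1 : Matrix (F ⊕ C) (F ⊕ C) ℝ) - A * P_ideal * K⁻¹ * R).mulVec r)
          (Sum.inr c) = (-(Z.mulVec fun f => r (Sum.inl f))) c) := by
  have hAP : A * P_ideal = fromRows 0 S := by
    rw [hA, hP, hS, fromBlocks_mul_fromRows_neg_inv_mul_one _ _ _ _ hAff]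
  have hKS : K = S := by
    rw [hK, Matrix.mul_assoc, hAP, hR, fromCols_one_mul_fromRows_zero]
  have hE : 1 - A * P_ideal * K⁻¹ * R = fromBlocks (1 : Matrix F F ℝ) 0 (-Z) 0 := by
    rw [hKS, hAP, hR, one_sub_fromRows_zero_mul_inv_mul_fromCols_one _ _ hSinv]
  refine ⟨hKS, hE, fun r => ⟨fun f => ?_, fun c => ?_⟩⟩ <;>
    rw [hE, fromBlocks_one_zero_neg_zero_mulVec] <;> rfl

/-- With ideal interpolation and invertible Schur complement, residual
propagation of coarse-grid correction is `fromBlocks I 0 (-Z) 0`: the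
propagated residual has F-part `r_f` and C-part `-Z r_f`. -/
theorem residual_propagation_ideal_interpolation
    {F C : Type*} [Fintype F] [Fintype C] [DecidableEq F] [DecidableEq C]
    [Nonempty F] [Nonempty C]
    (A_ff : Matrix F F ℝ) (A_fc : Matrix F C ℝ) (A_cf : Matrix C F ℝ) (A_cc : Matrix C C ℝ)
    (Z : Matrix C F ℝ)
    (A : Matrix (F ⊕ C) (F ⊕ C) ℝ) (hA : A = fromBlocks A_ff A_fc A_cf A_cc)
    (hAff : IsUnit A_ff.det)
    (P_ideal : Matrix (F ⊕ C) C ℝ)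
    (hP : P_ideal = fromRows (-(A_ff⁻¹ * A_fc)) (1 : Matrix C C ℝ))
    (R : Matrix C (F ⊕ C) ℝ) (hR : R = fromCols Z (1 : Matrix C C ℝ))
    (S : Matrix C C ℝ) (hS : S = A_cc - A_cf * A_ff⁻¹ * A_fc) (hSinv : IsUnit S.det)
    (K : Matrix C C ℝ) (hK : K = R * A * P_ideal) :
    K = S ∧
    (1 : Matrix (F ⊕ C) (F ⊕ C) ℝ) - A * P_ideal * K⁻¹ * R
        = fromBlocks (1 : Matrix F F ℝ) 0 (-Z) 0 ∧
    ∀ r : (F ⊕ C) → ℝ,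
      (∀ f : F, (((1 : Matrix (F ⊕ C) (F ⊕ C) ℝ) - A * P_ideal * K⁻¹ * R).mulVec r)
          (Sum.inl f) = r (Sum.inl f)) ∧
      (∀ c : C, (((1 : Matrix (F ⊕ C) (F ⊕ C) ℝ) - A * P_ideal * K⁻¹ * R).mulVec r)
          (Sum.inr c) = (-(Z.mulVec fun f => r (Sum.inl f))) c) :=
  residual_propagation_ideal_interpolation_general A_ff A_fc A_cf A_cc Z A hA hAff P_ideal hP R hR S
    hS hSinv K hK
end

section
/- Let Δ : Matrix F F ℝ be arbitrary, let P be the interpolation operator with F-block W := -Δ * A_fc, let R₀ = [0, I] be the restriction operator with Z = 0, and suppose K := R₀*A*P is invertible. Then the residual-propagation operator of coarse-grid correction satisfies A*P*K⁻¹*R₀ = fromBlocks 0 ((I - A_ff*Δ)*A_fc*K⁻¹) 0 I; moreover in this case K = A_cf*W + A_cc. -/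
open Matrix

namespace Matrix

variable {R m n l : Type*} [Fintype n] [DecidableEq n]

lemma fromCols_zero_one_mul_fromRows [Fintype m] [Semiring R] (X : Matrix m l R)
    (Y : Matrix n l R) :
    fromCols (0 : Matrix n m R) (1 : Matrix n n R) * fromRows X Y = Y := by
  rw [fromCols_mul_fromRows, Matrix.zero_mul, Matrix.one_mul, zero_add]

lemma fromBlocks_mul_fromRows_one [Fintype m] [Semiring R] (A₁₁ : Matrix m m R)
    (A₁₂ : Matrix m n R) (A₂₁ : Matrix n m R) (A₂₂ : Matrix n n R) (W : Matrix m n R) :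
    fromBlocks A₁₁ A₁₂ A₂₁ A₂₂ * fromRows W (1 : Matrix n n R) =
      fromRows (A₁₁ * W + A₁₂) (A₂₁ * W + A₂₂) := by
  rw [fromBlocks_mul_fromRows, Matrix.mul_one, Matrix.mul_one]

lemma fromCols_zero_one_mul_fromBlocks_mul_fromRows_one [Fintype m] [Semiring R]
    (A₁₁ : Matrix m m R) (A₁₂ : Matrix m n R) (A₂₁ : Matrix n m R) (A₂₂ : Matrix n n R)
    (W : Matrix m n R) :
    fromCols (0 : Matrix n m R) (1 : Matrix n n R) * fromBlocks A₁₁ A₁₂ A₂₁ A₂₂ *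
      fromRows W (1 : Matrix n n R) = A₂₁ * W + A₂₂ := by
  rw [Matrix.mul_assoc, fromBlocks_mul_fromRows_one, fromCols_zero_one_mul_fromRows]

lemma fromRows_mul_nonsing_inv_mul_fromCols_zero_one [CommRing R] (X : Matrix m n R)
    (K : Matrix n n R) (hK : IsUnit K.det) :
    fromRows X K * K⁻¹ * fromCols (0 : Matrix n m R) (1 : Matrix n n R) =
      fromBlocks 0 (X * K⁻¹) 0 1 := by
  rw [fromRows_mul, mul_nonsing_inv K hK, fromRows_mul_fromCols]
  simp only [Matrix.mul_zero, Matrix.mul_one]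

end Matrix

theorem residual_propagation_approximate_interpolation_Z_zero_general
    {F C : Type*} [Fintype F] [Fintype C] [DecidableEq F] [DecidableEq C]
    (A_ff : Matrix F F ℝ) (A_fc : Matrix F C ℝ) (A_cf : Matrix C F ℝ) (A_cc : Matrix C C ℝ)
    (Δ : Matrix F F ℝ) (W : Matrix F C ℝ) (hW : W = -(Δ * A_fc))
    (A : Matrix (F ⊕ C) (F ⊕ C) ℝ) (hA : A = fromBlocks A_ff A_fc A_cf A_cc)
    (P : Matrix (F ⊕ C) C ℝ) (hP : P = fromRows W (1 : Matrix C C ℝ))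
    (R₀ : Matrix C (F ⊕ C) ℝ) (hR : R₀ = fromCols (0 : Matrix C F ℝ) (1 : Matrix C C ℝ))
    (K : Matrix C C ℝ) (hK : K = R₀ * A * P) (hKinv : IsUnit K.det) :
    A * P * K⁻¹ * R₀
        = fromBlocks 0 (((1 : Matrix F F ℝ) - A_ff * Δ) * A_fc * K⁻¹) 0 (1 : Matrix C C ℝ) ∧
    K = A_cf * W + A_cc := by
  have hK_blocks : K = A_cf * W + A_cc := by
    rw [hK, hR, hA, hP, fromCols_zero_one_mul_fromBlocks_mul_fromRows_one]
  have hFineRows : A_ff * W + A_fc = (1 - A_ff * Δ) * A_fc := by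
    rw [hW, Matrix.mul_neg, Matrix.sub_mul, Matrix.one_mul, Matrix.mul_assoc, neg_add_eq_sub]
  have hAP : A * P = fromRows ((1 - A_ff * Δ) * A_fc) K := by
    rw [hA, hP, fromBlocks_mul_fromRows_one, hFineRows, hK_blocks]
  refine ⟨?_, hK_blocks⟩
  rw [hAP, hR]
  exact fromRows_mul_nonsing_inv_mul_fromCols_zero_one _ K hKinv

/-- With `W = -Δ A_fc` and `Z = 0`, residual propagation of coarse-grid
correction is `fromBlocks 0 ((I - A_ff Δ) A_fc K⁻¹) 0 I`, and moreover
`K = A_cf W + A_cc`. -/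
theorem residual_propagation_approximate_interpolation_Z_zero
    {F C : Type*} [Fintype F] [Fintype C] [DecidableEq F] [DecidableEq C]
    [Nonempty F] [Nonempty C]
    (A_ff : Matrix F F ℝ) (A_fc : Matrix F C ℝ) (A_cf : Matrix C F ℝ) (A_cc : Matrix C C ℝ)
    (Δ : Matrix F F ℝ) (W : Matrix F C ℝ) (hW : W = -(Δ * A_fc))
    (A : Matrix (F ⊕ C) (F ⊕ C) ℝ) (hA : A = fromBlocks A_ff A_fc A_cf A_cc)
    (P : Matrix (F ⊕ C) C ℝ) (hP : P = fromRows W (1 : Matrix C C ℝ))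
    (R₀ : Matrix C (F ⊕ C) ℝ) (hR : R₀ = fromCols (0 : Matrix C F ℝ) (1 : Matrix C C ℝ))
    (K : Matrix C C ℝ) (hK : K = R₀ * A * P) (hKinv : IsUnit K.det) :
    A * P * K⁻¹ * R₀
        = fromBlocks 0 (((1 : Matrix F F ℝ) - A_ff * Δ) * A_fc * K⁻¹) 0 (1 : Matrix C C ℝ) ∧
    K = A_cf * W + A_cc :=
  residual_propagation_approximate_interpolation_Z_zero_general A_ff A_fc A_cf A_cc Δ W hW A hA P hP
    R₀ hR K hK hKinv
end

section
/- (Lemma on coarse-grid correction with Z = 0.) Let Δ : Matrix F F ℝ be arbitrary, let P be the interpolation operator with F-block W := -Δ * A_fc, let R₀ = [0, I] be the restriction operator with Z = 0, suppose K := R₀*A*P is invertible, and let Π̃ := A*P*K⁻¹*R₀ denote the residual-propagation coarse-grid-correction projector. Then its ℓ²-operator norm satisfies ‖Π̃‖² = 1 + ‖B‖², where B := (I - A_ff*Δ)*A_fc*K⁻¹ and ‖B‖ is the ℓ²-operator norm of B (i.e., its largest singular value). -/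
/-!
With `Z = 0` the restriction `R₀` reads off the coarse block of `A P`, which is `K` itself, so
`Π̃ = [[0, B], [0, I]]`. This matrix sends `(x_F, x_C)` to `(B x_C, x_C)`, hence
`‖Π̃ x‖² = ‖B x_C‖² + ‖x_C‖² ≤ (1 + ‖B‖²) ‖x‖²`; conversely, testing `Π̃` on vectors supported
on `C` gives `‖B v‖² + ‖v‖² ≤ ‖Π̃‖² ‖v‖²`, i.e. `‖B‖² ≤ ‖Π̃‖² - 1`.
-/

open Matrix WithLp
open scoped Matrix.Norms.L2Operator

theorem Matrix.fromRows_mul_inv_mul_fromCols_zero_one {R F C : Type*} [CommRing R] [Fintype C]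
    [DecidableEq C] (X : Matrix F C R) {Y : Matrix C C R} (hY : IsUnit Y.det) :
    fromRows X Y * Y⁻¹ * fromCols (0 : Matrix C F R) 1 = fromBlocks 0 (X * Y⁻¹) 0 1 := by
  rw [fromRows_mul, mul_nonsing_inv Y hY, fromRows_mul_fromCols]
  simp

section

variable {𝕜 : Type*} [RCLike 𝕜] {m n : Type*} [Fintype m] [Fintype n]

theorem EuclideanSpace.norm_sq_toLp_sumElim (u : m → 𝕜) (v : n → 𝕜) :
    ‖(toLp 2 (u ⊕ᵥ v) : EuclideanSpace 𝕜 (m ⊕ n))‖ ^ 2 =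
      ‖(toLp 2 u : EuclideanSpace 𝕜 m)‖ ^ 2 + ‖(toLp 2 v : EuclideanSpace 𝕜 n)‖ ^ 2 := by
  simp only [EuclideanSpace.norm_sq_eq, Fintype.sum_sum_type, Sum.elim_inl, Sum.elim_inr]

namespace Matrix

variable [DecidableEq n]

theorem l2_opNorm_sq_le_iff (A : Matrix m n 𝕜) {c : ℝ} (hc : 0 ≤ c) :
    ‖A‖ ^ 2 ≤ c ↔ ∀ x : EuclideanSpace 𝕜 n, ‖toEuclideanLin A x‖ ^ 2 ≤ c * ‖x‖ ^ 2 := by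
  rw [← Real.le_sqrt (norm_nonneg _) hc, l2_opNorm_def,
    ContinuousLinearMap.opNorm_le_iff (Real.sqrt_nonneg c)]
  refine forall_congr' fun x => ?_
  rw [← Real.sqrt_sq (norm_nonneg x), ← Real.sqrt_mul hc, Real.sqrt_sq (norm_nonneg x),
    Real.le_sqrt (norm_nonneg _) (by positivity)]
  rfl

theorem toEuclideanLin_fromBlocks_zero_one_toLp_sumElim [DecidableEq m] (B : Matrix m n 𝕜)
    (u : m → 𝕜) (v : n → 𝕜) :
    toEuclideanLin (fromBlocks 0 B 0 1) (toLp 2 (u ⊕ᵥ v)) =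
      toLp 2 ((B *ᵥ v) ⊕ᵥ v) := by
  simp [toEuclideanLin, fromBlocks_mulVec]

theorem l2_opNorm_fromBlocks_zero_one_sq [DecidableEq m] [Nonempty n] (B : Matrix m n 𝕜) :
    ‖(fromBlocks 0 B 0 1 : Matrix (m ⊕ n) (m ⊕ n) 𝕜)‖ ^ 2 = 1 + ‖B‖ ^ 2 := by
  set M : Matrix (m ⊕ n) (m ⊕ n) 𝕜 := fromBlocks 0 B 0 1
  have hM (u : m → 𝕜) (v : n → 𝕜) : ‖toEuclideanLin M (toLp 2 (u ⊕ᵥ v))‖ ^ 2 =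
      ‖toEuclideanLin B (toLp 2 v)‖ ^ 2 + ‖(toLp 2 v : EuclideanSpace 𝕜 n)‖ ^ 2 := by
    rw [toEuclideanLin_fromBlocks_zero_one_toLp_sumElim, EuclideanSpace.norm_sq_toLp_sumElim]
    rfl
  have upper : ‖M‖ ^ 2 ≤ 1 + ‖B‖ ^ 2 := by
    refine (l2_opNorm_sq_le_iff M (by positivity)).2 fun x => ?_
    obtain ⟨u, v, rfl⟩ : ∃ u v, x = toLp 2 (u ⊕ᵥ v) :=
      ⟨_, _, by rw [Sum.elim_comp_inl_inr, toLp_ofLp]⟩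
    have hB := (l2_opNorm_sq_le_iff B (sq_nonneg _)).1 le_rfl (toLp 2 v)
    rw [hM, EuclideanSpace.norm_sq_toLp_sumElim]
    nlinarith [norm_nonneg (toLp 2 u : EuclideanSpace 𝕜 m)]
  have hM_inr (x : EuclideanSpace 𝕜 n) :
      ‖toEuclideanLin B x‖ ^ 2 + ‖x‖ ^ 2 ≤ ‖M‖ ^ 2 * ‖x‖ ^ 2 := by
    have hMx := (l2_opNorm_sq_le_iff M (sq_nonneg _)).1 le_rfl (toLp 2 (0 ⊕ᵥ ofLp x))
    rwa [hM, EuclideanSpace.norm_sq_toLp_sumElim, toLp_ofLp, toLp_zero, norm_zero,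
      zero_pow two_ne_zero, zero_add] at hMx
  have one_le : 1 ≤ ‖M‖ ^ 2 := by
    obtain ⟨j⟩ := ‹Nonempty n›
    have hj := hM_inr (PiLp.single 2 j 1)
    rw [PiLp.norm_single, norm_one, one_pow, mul_one] at hj
    nlinarith [sq_nonneg ‖toEuclideanLin B (PiLp.single 2 j 1)‖]
  have lower : ‖B‖ ^ 2 ≤ ‖M‖ ^ 2 - 1 :=
    (l2_opNorm_sq_le_iff B (by linarith)).2 fun x => by nlinarith [hM_inr x]
  linarith

end Matrix

end

theorem norm_sq_cgc_projector_Z_zero_general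
    {F C : Type*} [Fintype F] [Fintype C] [DecidableEq F] [DecidableEq C]
    [Nonempty C]
    (A_ff : Matrix F F ℝ) (A_fc : Matrix F C ℝ) (A_cf : Matrix C F ℝ) (A_cc : Matrix C C ℝ)
    (Δ : Matrix F F ℝ) (W : Matrix F C ℝ) (hW : W = -(Δ * A_fc))
    (A : Matrix (F ⊕ C) (F ⊕ C) ℝ) (hA : A = fromBlocks A_ff A_fc A_cf A_cc)
    (P : Matrix (F ⊕ C) C ℝ) (hP : P = fromRows W (1 : Matrix C C ℝ))
    (R₀ : Matrix C (F ⊕ C) ℝ) (hR : R₀ = fromCols (0 : Matrix C F ℝ) (1 : Matrix C C ℝ))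
    (K : Matrix C C ℝ) (hK : K = R₀ * A * P) (hKinv : IsUnit K.det)
    (Pit : Matrix (F ⊕ C) (F ⊕ C) ℝ) (hPit : Pit = A * P * K⁻¹ * R₀)
    (B : Matrix F C ℝ) (hB : B = ((1 : Matrix F F ℝ) - A_ff * Δ) * A_fc * K⁻¹) :
    ‖Pit‖ ^ 2 = 1 + ‖B‖ ^ 2 := by
  have hAP : A * P = fromRows (A_ff * W + A_fc) (A_cf * W + A_cc) := by
    rw [hA, hP, fromBlocks_mul_fromRows, Matrix.mul_one, Matrix.mul_one]
  have hK_block : K = A_cf * W + A_cc := by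
    rw [hK, Matrix.mul_assoc, hAP, hR, fromCols_mul_fromRows, Matrix.zero_mul, zero_add,
      Matrix.one_mul]
  have hAP_fine : A_ff * W + A_fc = ((1 : Matrix F F ℝ) - A_ff * Δ) * A_fc := by
    rw [hW, Matrix.sub_mul, Matrix.one_mul, Matrix.mul_neg, Matrix.mul_assoc]
    abel
  rw [hPit, hAP, hAP_fine, ← hK_block, hR, fromRows_mul_inv_mul_fromCols_zero_one _ hKinv, ← hB]
  exact l2_opNorm_fromBlocks_zero_one_sq B

/-- Lemma on coarse-grid correction with `Z = 0`: the ℓ² operator norm of the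
residual-propagation coarse-grid-correction projector `Π̃ = A P K⁻¹ R₀`
satisfies `‖Π̃‖² = 1 + ‖B‖²` where `B = (I - A_ff Δ) A_fc K⁻¹`. -/
theorem norm_sq_cgc_projector_Z_zero
    {F C : Type*} [Fintype F] [Fintype C] [DecidableEq F] [DecidableEq C]
    [Nonempty F] [Nonempty C]
    (A_ff : Matrix F F ℝ) (A_fc : Matrix F C ℝ) (A_cf : Matrix C F ℝ) (A_cc : Matrix C C ℝ)
    (Δ : Matrix F F ℝ) (W : Matrix F C ℝ) (hW : W = -(Δ * A_fc))
    (A : Matrix (F ⊕ C) (F ⊕ C) ℝ) (hA : A = fromBlocks A_ff A_fc A_cf A_cc)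
    (P : Matrix (F ⊕ C) C ℝ) (hP : P = fromRows W (1 : Matrix C C ℝ))
    (R₀ : Matrix C (F ⊕ C) ℝ) (hR : R₀ = fromCols (0 : Matrix C F ℝ) (1 : Matrix C C ℝ))
    (K : Matrix C C ℝ) (hK : K = R₀ * A * P) (hKinv : IsUnit K.det)
    (Pit : Matrix (F ⊕ C) (F ⊕ C) ℝ) (hPit : Pit = A * P * K⁻¹ * R₀)
    (B : Matrix F C ℝ) (hB : B = ((1 : Matrix F F ℝ) - A_ff * Δ) * A_fc * K⁻¹) :
    ‖Pit‖ ^ 2 = 1 + ‖B‖ ^ 2 :=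
  norm_sq_cgc_projector_Z_zero_general A_ff A_fc A_cf A_cc Δ W hW A hA P hP R₀ hR K hK hKinv Pit
    hPit B hB
end

section
/- Suppose A_ff is invertible, let R_ideal = [-A_cf * A_ff⁻¹, I] be the ideal restriction operator, and suppose the Schur complement S := A_cc - A_cf * A_ff⁻¹ * A_fc is invertible. Then for every W : Matrix F C ℝ, with P the interpolation operator with F-block W, one has K := R_ideal * A * P = S, and the coarse-grid-correction error-propagation operator satisfies I - P*K⁻¹*R_ideal*A = fromBlocks I (-W) 0 0; in particular the C-component of the propagated error is zero for every initial error, independent of the choice of W. -/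
/-! Writing `A` in block form, the ideal restriction `[-A_cf A_ff⁻¹, I]` is exactly the row
operation of block Gaussian elimination: it kills the F-columns of `A` and leaves the Schur
complement in the C-columns, so `R A = [0, S]`. Hence `R A P = S` whatever the F-block `W` of
`P`, and `P (R A P)⁻¹ R A = [[0, W], [0, I]]`, a projection whose C-rows are the identity. -/

open Matrix

section

variable {F C R : Type*} [CommRing R]

theorem fromCols_neg_mul_inv_one_mul_fromBlocks [Fintype F] [Fintype C] [DecidableEq F]
    [DecidableEq C] (A_ff : Matrix F F R) (A_fc : Matrix F C R) (A_cf : Matrix C F R)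
    (A_cc : Matrix C C R) (hA_ff : IsUnit A_ff.det) :
    (fromCols (-(A_cf * A_ff⁻¹)) 1 : Matrix C (F ⊕ C) R) * fromBlocks A_ff A_fc A_cf A_cc
      = fromCols 0 (A_cc - A_cf * A_ff⁻¹ * A_fc) := by
  rw [fromCols_mul_fromBlocks, Matrix.neg_mul, Matrix.neg_mul, Matrix.mul_assoc,
    nonsing_inv_mul _ hA_ff, Matrix.mul_one, Matrix.one_mul, Matrix.one_mul, neg_add_cancel,
    neg_add_eq_sub]

theorem fromCols_zero_mul_fromRows_one [Fintype F] [Fintype C] [DecidableEq C]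
    (S : Matrix C C R) (W : Matrix F C R) :
    (fromCols 0 S : Matrix C (F ⊕ C) R) * (fromRows W 1 : Matrix (F ⊕ C) C R) = S := by
  rw [fromCols_mul_fromRows, Matrix.zero_mul, zero_add, Matrix.mul_one]

theorem one_sub_fromRows_mul_inv_mul_fromCols_zero [Fintype C] [DecidableEq F] [DecidableEq C]
    (S : Matrix C C R) (W : Matrix F C R) (hS : IsUnit S.det) :
    (1 : Matrix (F ⊕ C) (F ⊕ C) R)
        - fromRows W 1 * S⁻¹ * (fromCols 0 S : Matrix C (F ⊕ C) R) = fromBlocks 1 (-W) 0 0 := by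
  rw [Matrix.mul_assoc, mul_fromCols, Matrix.mul_zero, nonsing_inv_mul _ hS, fromRows_mul,
    mul_fromCols, mul_fromCols, Matrix.mul_zero, Matrix.mul_zero, Matrix.mul_one, Matrix.one_mul,
    fromRows_fromCols_eq_fromBlocks, ← fromBlocks_one, sub_eq_add_neg, fromBlocks_neg,
    fromBlocks_add]
  simp

theorem fromBlocks_zero_zero_mulVec_inr [Fintype F] [Fintype C] (A : Matrix F F R)
    (B : Matrix F C R) (e : F ⊕ C → R) (c : C) :
    (fromBlocks A B 0 0 *ᵥ e) (Sum.inr c) = 0 := by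
  simp [fromBlocks_mulVec]

end

theorem error_propagation_ideal_restriction_general
    {F C : Type*} [Fintype F] [Fintype C] [DecidableEq F] [DecidableEq C]
    (A_ff : Matrix F F ℝ) (A_fc : Matrix F C ℝ) (A_cf : Matrix C F ℝ) (A_cc : Matrix C C ℝ)
    (A : Matrix (F ⊕ C) (F ⊕ C) ℝ) (hA : A = fromBlocks A_ff A_fc A_cf A_cc)
    (hAff : IsUnit A_ff.det)
    (R_ideal : Matrix C (F ⊕ C) ℝ)
    (hR : R_ideal = fromCols (-(A_cf * A_ff⁻¹)) (1 : Matrix C C ℝ))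
    (S : Matrix C C ℝ) (hS : S = A_cc - A_cf * A_ff⁻¹ * A_fc) (hSinv : IsUnit S.det) :
    ∀ W : Matrix F C ℝ, ∀ P : Matrix (F ⊕ C) C ℝ, P = fromRows W (1 : Matrix C C ℝ) →
      R_ideal * A * P = S ∧
      (1 : Matrix (F ⊕ C) (F ⊕ C) ℝ) - P * (R_ideal * A * P)⁻¹ * R_ideal * A
          = fromBlocks (1 : Matrix F F ℝ) (-W) 0 0 ∧
      ∀ e : (F ⊕ C) → ℝ, ∀ c : C,
        (((1 : Matrix (F ⊕ C) (F ⊕ C) ℝ) - P * (R_ideal * A * P)⁻¹ * R_ideal * A).mulVec e)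
          (Sum.inr c) = 0 := by
  intro W P hP
  have hRA : R_ideal * A = fromCols 0 S := by
    rw [hR, hA, hS, fromCols_neg_mul_inv_one_mul_fromBlocks _ _ _ _ hAff]
  have hK : R_ideal * A * P = S := by
    rw [hRA, hP, fromCols_zero_mul_fromRows_one]
  have hE : (1 : Matrix (F ⊕ C) (F ⊕ C) ℝ) - P * (R_ideal * A * P)⁻¹ * R_ideal * A
      = fromBlocks 1 (-W) 0 0 := by
    rw [hK, Matrix.mul_assoc _ R_ideal, hRA, hP,
      one_sub_fromRows_mul_inv_mul_fromCols_zero _ _ hSinv]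
  refine ⟨hK, hE, fun e c => ?_⟩
  rw [hE, fromBlocks_zero_zero_mulVec_inr]

/-- With ideal restriction `R_ideal = [-A_cf A_ff⁻¹, I]` and invertible Schur
complement `S`, for every interpolation F-block `W`: the coarse-grid operator
equals `S` and error propagation of coarse-grid correction is
`fromBlocks I (-W) 0 0`; in particular the C-component of the propagated error
is zero, independent of `W`. -/
theorem error_propagation_ideal_restriction
    {F C : Type*} [Fintype F] [Fintype C] [DecidableEq F] [DecidableEq C]
    [Nonempty F] [Nonempty C]
    (A_ff : Matrix F F ℝ) (A_fc : Matrix F C ℝ) (A_cf : Matrix C F ℝ) (A_cc : Matrix C C ℝ)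
    (A : Matrix (F ⊕ C) (F ⊕ C) ℝ) (hA : A = fromBlocks A_ff A_fc A_cf A_cc)
    (hAff : IsUnit A_ff.det)
    (R_ideal : Matrix C (F ⊕ C) ℝ)
    (hR : R_ideal = fromCols (-(A_cf * A_ff⁻¹)) (1 : Matrix C C ℝ))
    (S : Matrix C C ℝ) (hS : S = A_cc - A_cf * A_ff⁻¹ * A_fc) (hSinv : IsUnit S.det) :
    ∀ W : Matrix F C ℝ, ∀ P : Matrix (F ⊕ C) C ℝ, P = fromRows W (1 : Matrix C C ℝ) →
      R_ideal * A * P = S ∧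
      (1 : Matrix (F ⊕ C) (F ⊕ C) ℝ) - P * (R_ideal * A * P)⁻¹ * R_ideal * A
          = fromBlocks (1 : Matrix F F ℝ) (-W) 0 0 ∧
      ∀ e : (F ⊕ C) → ℝ, ∀ c : C,
        (((1 : Matrix (F ⊕ C) (F ⊕ C) ℝ) - P * (R_ideal * A * P)⁻¹ * R_ideal * A).mulVec e)
          (Sum.inr c) = 0 :=
  error_propagation_ideal_restriction_general A_ff A_fc A_cf A_cc A hA hAff R_ideal hR S hS hSinv
end

section
/- Let Δ : Matrix F F ℝ and suppose K := R*A*P is invertible. Define the effective interpolation Ŵ := (I - Δ*A_ff)*W - Δ*A_fc and M⁻¹ := (fromBlocks I Ŵ 0 I) * (fromBlocks Δ 0 0 K⁻¹) * (fromBlocks I 0 Z I). Then the two-grid error-propagation operator consisting of coarse-grid correction followed by F-relaxation satisfies (fromBlocks (I - Δ*A_ff) (-Δ*A_fc) 0 I) * (I - P*K⁻¹*R*A) = I - M⁻¹*A. -/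
/-!
With `D := fromBlocks Δ 0 0 0`, F-relaxation is `E = 1 - D A`, it maps the interpolation
`P = [W; I]` to the effective interpolation `E P = [Ŵ; I]`, and the block product defining
`M⁻¹` expands to `D + [Ŵ; I] K⁻¹ R`.
Hence `E (1 - P K⁻¹ R A) = 1 - D A - (E P) K⁻¹ R A = 1 - M⁻¹ A`.
-/

open Matrix

namespace Matrix

variable {α : Type*} [Ring α] {m n : Type*} [Fintype m] [Fintype n] [DecidableEq n]

theorem one_sub_fromBlocks_zero_mul_fromBlocks [DecidableEq m] (Δ A₁₁ : Matrix m m α)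
    (A₁₂ : Matrix m n α) (A₂₁ : Matrix n m α) (A₂₂ : Matrix n n α) :
    1 - fromBlocks Δ 0 0 0 * fromBlocks A₁₁ A₁₂ A₂₁ A₂₂
      = fromBlocks (1 - Δ * A₁₁) (-(Δ * A₁₂)) 0 1 := by
  rw [fromBlocks_multiply, ← fromBlocks_one, sub_eq_add_neg, fromBlocks_neg, fromBlocks_add]
  simp only [Matrix.zero_mul, add_zero, neg_zero, ← sub_eq_add_neg, zero_sub]

theorem fromBlocks_unitUpper_mul_fromRows_one (X : Matrix m m α) (Y W : Matrix m n α) :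
    (fromBlocks X Y 0 1 : Matrix (m ⊕ n) (m ⊕ n) α) * fromRows W (1 : Matrix n n α)
      = fromRows (X * W + Y) 1 := by
  rw [fromBlocks_mul_fromRows]
  simp

theorem fromBlocks_LDU_eq_add_fromRows_mul_fromCols [DecidableEq m] (V : Matrix m n α)
    (D : Matrix m m α) (G : Matrix n n α) (Z : Matrix n m α) :
    fromBlocks 1 V 0 1 * fromBlocks D 0 0 G * fromBlocks 1 0 Z 1
      = fromBlocks D 0 0 0 + fromRows V 1 * G * fromCols Z 1 := by
  rw [fromRows_mul, fromRows_mul_fromCols, fromBlocks_add]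
  simp [fromBlocks_multiply, Matrix.mul_assoc]

end Matrix

theorem two_grid_error_propagation_LDU_form_general
    {F C : Type*} [Fintype F] [Fintype C] [DecidableEq F] [DecidableEq C]
    (A_ff : Matrix F F ℝ) (A_fc : Matrix F C ℝ) (A_cf : Matrix C F ℝ) (A_cc : Matrix C C ℝ)
    (W : Matrix F C ℝ) (Z : Matrix C F ℝ) (Δ : Matrix F F ℝ)
    (A : Matrix (F ⊕ C) (F ⊕ C) ℝ) (hA : A = fromBlocks A_ff A_fc A_cf A_cc)
    (P : Matrix (F ⊕ C) C ℝ) (hP : P = fromRows W (1 : Matrix C C ℝ))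
    (R : Matrix C (F ⊕ C) ℝ) (hR : R = fromCols Z (1 : Matrix C C ℝ))
    (K : Matrix C C ℝ)
    (What : Matrix F C ℝ) (hWhat : What = ((1 : Matrix F F ℝ) - Δ * A_ff) * W - Δ * A_fc)
    (Minv : Matrix (F ⊕ C) (F ⊕ C) ℝ)
    (hMinv : Minv = fromBlocks (1 : Matrix F F ℝ) What 0 (1 : Matrix C C ℝ)
        * fromBlocks Δ 0 0 K⁻¹
        * fromBlocks (1 : Matrix F F ℝ) 0 Z (1 : Matrix C C ℝ)) :
    fromBlocks ((1 : Matrix F F ℝ) - Δ * A_ff) (-(Δ * A_fc)) 0 (1 : Matrix C C ℝ)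
        * ((1 : Matrix (F ⊕ C) (F ⊕ C) ℝ) - P * K⁻¹ * R * A)
      = 1 - Minv * A := by
  set E := fromBlocks ((1 : Matrix F F ℝ) - Δ * A_ff) (-(Δ * A_fc)) 0 (1 : Matrix C C ℝ)
  have hrelax : E = 1 - fromBlocks Δ 0 0 0 * A := by
    rw [hA, one_sub_fromBlocks_zero_mul_fromBlocks]
  have hinterp : E * P = fromRows What 1 := by
    rw [hP, hWhat, sub_eq_add_neg]
    exact fromBlocks_unitUpper_mul_fromRows_one _ _ _
  have hprec : Minv = fromBlocks Δ 0 0 0 + E * P * K⁻¹ * R := by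
    rw [hMinv, fromBlocks_LDU_eq_add_fromRows_mul_fromCols, hinterp, hR]
  calc E * (1 - P * K⁻¹ * R * A)
      = E - E * P * K⁻¹ * R * A := by
        simp only [Matrix.mul_sub, Matrix.mul_one, Matrix.mul_assoc]
    _ = 1 - Minv * A := by rw [hprec, add_mul, hrelax]; abel

/-- The two-grid error-propagation operator (coarse-grid correction followed by
F-relaxation) can be written as `I - M⁻¹ A` for the approximate block LDU
preconditioner `M`. -/
theorem two_grid_error_propagation_LDU_form
    {F C : Type*} [Fintype F] [Fintype C] [DecidableEq F] [DecidableEq C]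
    [Nonempty F] [Nonempty C]
    (A_ff : Matrix F F ℝ) (A_fc : Matrix F C ℝ) (A_cf : Matrix C F ℝ) (A_cc : Matrix C C ℝ)
    (W : Matrix F C ℝ) (Z : Matrix C F ℝ) (Δ : Matrix F F ℝ)
    (A : Matrix (F ⊕ C) (F ⊕ C) ℝ) (hA : A = fromBlocks A_ff A_fc A_cf A_cc)
    (P : Matrix (F ⊕ C) C ℝ) (hP : P = fromRows W (1 : Matrix C C ℝ))
    (R : Matrix C (F ⊕ C) ℝ) (hR : R = fromCols Z (1 : Matrix C C ℝ))
    (K : Matrix C C ℝ) (hK : K = R * A * P) (hKinv : IsUnit K.det)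
    (What : Matrix F C ℝ) (hWhat : What = ((1 : Matrix F F ℝ) - Δ * A_ff) * W - Δ * A_fc)
    (Minv : Matrix (F ⊕ C) (F ⊕ C) ℝ)
    (hMinv : Minv = fromBlocks (1 : Matrix F F ℝ) What 0 (1 : Matrix C C ℝ)
        * fromBlocks Δ 0 0 K⁻¹
        * fromBlocks (1 : Matrix F F ℝ) 0 Z (1 : Matrix C C ℝ)) :
    fromBlocks ((1 : Matrix F F ℝ) - Δ * A_ff) (-(Δ * A_fc)) 0 (1 : Matrix C C ℝ)
        * ((1 : Matrix (F ⊕ C) (F ⊕ C) ℝ) - P * K⁻¹ * R * A)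
      = 1 - Minv * A :=
  two_grid_error_propagation_LDU_form_general A_ff A_fc A_cf A_cc W Z Δ A hA P hP R hR K What hWhat
    Minv hMinv
end

section
/- Let Δ : Matrix F F ℝ and suppose K := R*A*P is invertible. Define Ŵ := (I - Δ*A_ff)*W - Δ*A_fc, M⁻¹ := (fromBlocks I Ŵ 0 I) * (fromBlocks Δ 0 0 K⁻¹) * (fromBlocks I 0 Z I), H := I - Δ*A_ff - Ŵ*K⁻¹*(Z*A_ff + A_cf), and J := -K⁻¹*(Z*A_ff + A_cf). Then I - M⁻¹*A = fromBlocks H (-H*W) J (-J*W); in particular (I - M⁻¹*A) * P = 0, so the range of P lies in the null space of I - M⁻¹*A, and the range of I - M⁻¹*A is contained in the column span of the block column (H; J). -/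
/-!
The interpolation `P = [W; I]` splits the identity as `[I; 0] [I, -W] + P [0, I]`, so any
matrix `E` with `E P = 0` factors as `E = (E [I; 0]) [I, -W]`; this gives the block form and the
range statement once `(I - M⁻¹A) P = 0` is known. That identity holds because `M⁻¹` inverts
`A` on the range of `P`: the lower factor of `M⁻¹` turns `A P` into `[A_ff W + A_fc; K]`,
`K⁻¹` normalises the coarse row to `I`, and `Ŵ` is exactly the correction that turns the fine
row `Δ (A_ff W + A_fc)` back into `W`.
-/

open Matrix

namespace Matrix

variable {m n o α : Type*} [Fintype n] [Fintype o] [DecidableEq n] [DecidableEq o] [Ring α]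

theorem fromRows_mul_fromCols_add_fromRows_mul_fromCols_eq_one (W : Matrix n o α) :
    fromRows (1 : Matrix n n α) (0 : Matrix o n α) * fromCols 1 (-W)
      + fromRows W (1 : Matrix o o α) * fromCols (0 : Matrix o n α) 1 = 1 := by
  rw [fromRows_mul_fromCols, fromRows_mul_fromCols, fromBlocks_add]
  simp

theorem eq_mul_fromRows_one_zero_mul_fromCols_of_mul_fromRows_eq_zero
    {E : Matrix m (n ⊕ o) α} {W : Matrix n o α} (h : E * fromRows W (1 : Matrix o o α) = 0) :
    E = E * fromRows (1 : Matrix n n α) (0 : Matrix o n α) * fromCols 1 (-W) := by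
  conv_lhs => rw [← E.mul_one, ← fromRows_mul_fromCols_add_fromRows_mul_fromCols_eq_one W]
  rw [Matrix.mul_add, ← Matrix.mul_assoc, ← Matrix.mul_assoc, h, Matrix.zero_mul, add_zero]

end Matrix

section TwoGrid

variable {F C α : Type*} [Fintype F] [Fintype C] [DecidableEq F] [DecidableEq C] [CommRing α]
  (A_ff : Matrix F F α) (A_fc : Matrix F C α) (A_cf : Matrix C F α) (A_cc : Matrix C C α)
  (W What : Matrix F C α) (Z : Matrix C F α) (Δ : Matrix F F α) (Kinv : Matrix C C α)

/-- The paper's `M⁻¹`, with `Kinv` in the role of `K⁻¹`. -/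
def twoGridPrecond : Matrix (F ⊕ C) (F ⊕ C) α :=
  fromBlocks 1 What 0 1 * fromBlocks Δ 0 0 Kinv * fromBlocks 1 0 Z 1

omit [DecidableEq F] in
theorem fromCols_mul_fromBlocks_mul_fromRows_one :
    fromCols Z (1 : Matrix C C α) * fromBlocks A_ff A_fc A_cf A_cc
      * fromRows W (1 : Matrix C C α)
      = Z * (A_ff * W + A_fc) + (A_cf * W + A_cc) := by
  rw [Matrix.mul_assoc, fromBlocks_mul_fromRows, fromCols_mul_fromRows, Matrix.mul_one,
    Matrix.mul_one, Matrix.one_mul]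

theorem one_sub_twoGridPrecond_mul_mul_fromRows_one
    (hKinv : Kinv * (Z * (A_ff * W + A_fc) + (A_cf * W + A_cc)) = 1) :
    (1 - twoGridPrecond ((1 - Δ * A_ff) * W - Δ * A_fc) Z Δ Kinv
        * fromBlocks A_ff A_fc A_cf A_cc) * fromRows W (1 : Matrix C C α) = 0 := by
  rw [Matrix.sub_mul, Matrix.one_mul, sub_eq_zero, eq_comm]
  simp only [twoGridPrecond, Matrix.mul_assoc, fromBlocks_mul_fromRows, Matrix.one_mul,
    Matrix.zero_mul, Matrix.mul_one, add_zero, zero_add]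
  rw [hKinv, Matrix.mul_one]
  congr 1
  rw [Matrix.sub_mul, Matrix.one_mul, Matrix.mul_add, Matrix.mul_assoc]
  abel

theorem one_sub_twoGridPrecond_mul_mul_fromRows_one_zero :
    (1 - twoGridPrecond What Z Δ Kinv * fromBlocks A_ff A_fc A_cf A_cc)
      * fromRows (1 : Matrix F F α) (0 : Matrix C F α)
      = fromRows (1 - Δ * A_ff - What * Kinv * (Z * A_ff + A_cf))
          (-(Kinv * (Z * A_ff + A_cf))) := by
  simp only [twoGridPrecond, Matrix.sub_mul, Matrix.one_mul, Matrix.mul_assoc,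
    fromBlocks_mul_fromRows, Matrix.zero_mul, Matrix.mul_zero, Matrix.mul_one, add_zero, zero_add]
  ext (i | i) j
  · simp only [Matrix.sub_apply, fromRows_apply_inl, Matrix.add_apply]
    abel
  · simp

end TwoGrid

theorem two_grid_error_propagation_block_structure_general
    {F C : Type*} [Fintype F] [Fintype C] [DecidableEq F] [DecidableEq C]
    (A_ff : Matrix F F ℝ) (A_fc : Matrix F C ℝ) (A_cf : Matrix C F ℝ) (A_cc : Matrix C C ℝ)
    (W : Matrix F C ℝ) (Z : Matrix C F ℝ) (Δ : Matrix F F ℝ)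
    (A : Matrix (F ⊕ C) (F ⊕ C) ℝ) (hA : A = fromBlocks A_ff A_fc A_cf A_cc)
    (P : Matrix (F ⊕ C) C ℝ) (hP : P = fromRows W (1 : Matrix C C ℝ))
    (R : Matrix C (F ⊕ C) ℝ) (hR : R = fromCols Z (1 : Matrix C C ℝ))
    (K : Matrix C C ℝ) (hK : K = R * A * P) (hKinv : IsUnit K.det)
    (What : Matrix F C ℝ) (hWhat : What = ((1 : Matrix F F ℝ) - Δ * A_ff) * W - Δ * A_fc)
    (Minv : Matrix (F ⊕ C) (F ⊕ C) ℝ)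
    (hMinv : Minv = fromBlocks (1 : Matrix F F ℝ) What 0 (1 : Matrix C C ℝ)
        * fromBlocks Δ 0 0 K⁻¹
        * fromBlocks (1 : Matrix F F ℝ) 0 Z (1 : Matrix C C ℝ))
    (H : Matrix F F ℝ)
    (hH : H = (1 : Matrix F F ℝ) - Δ * A_ff - What * K⁻¹ * (Z * A_ff + A_cf))
    (J : Matrix C F ℝ) (hJ : J = -(K⁻¹ * (Z * A_ff + A_cf))) :
    (1 : Matrix (F ⊕ C) (F ⊕ C) ℝ) - Minv * A = fromBlocks H (-(H * W)) J (-(J * W)) ∧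
    ((1 : Matrix (F ⊕ C) (F ⊕ C) ℝ) - Minv * A) * P = 0 ∧
    ∀ x : (F ⊕ C) → ℝ, ∃ η : F → ℝ,
      ((1 : Matrix (F ⊕ C) (F ⊕ C) ℝ) - Minv * A).mulVec x = (fromRows H J).mulVec η := by
  obtain rfl : Minv = twoGridPrecond What Z Δ K⁻¹ := hMinv
  subst hA hP hR hWhat hH hJ
  have hK_left_inv : K⁻¹ * (Z * (A_ff * W + A_fc) + (A_cf * W + A_cc)) = 1 := by
    rw [← fromCols_mul_fromBlocks_mul_fromRows_one, ← hK]
    exact nonsing_inv_mul K hKinv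
  have hP_null :=
    one_sub_twoGridPrecond_mul_mul_fromRows_one A_ff A_fc A_cf A_cc W Z Δ K⁻¹ hK_left_inv
  have hfactor := eq_mul_fromRows_one_zero_mul_fromCols_of_mul_fromRows_eq_zero hP_null
  rw [one_sub_twoGridPrecond_mul_mul_fromRows_one_zero] at hfactor
  refine ⟨?_, hP_null, fun x => ⟨fromCols 1 (-W) *ᵥ x, ?_⟩⟩
  · rw [hfactor, fromRows_mul_fromCols]
    simp
  · rw [hfactor, mulVec_mulVec]

/-- Block structure of the two-grid error propagator `I - M⁻¹ A`: it equals
`fromBlocks H (-H W) J (-J W)`; in particular `(I - M⁻¹ A) P = 0` and the range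
of `I - M⁻¹ A` is contained in the column span of the block column `(H; J)`. -/
theorem two_grid_error_propagation_block_structure
    {F C : Type*} [Fintype F] [Fintype C] [DecidableEq F] [DecidableEq C]
    [Nonempty F] [Nonempty C]
    (A_ff : Matrix F F ℝ) (A_fc : Matrix F C ℝ) (A_cf : Matrix C F ℝ) (A_cc : Matrix C C ℝ)
    (W : Matrix F C ℝ) (Z : Matrix C F ℝ) (Δ : Matrix F F ℝ)
    (A : Matrix (F ⊕ C) (F ⊕ C) ℝ) (hA : A = fromBlocks A_ff A_fc A_cf A_cc)
    (P : Matrix (F ⊕ C) C ℝ) (hP : P = fromRows W (1 : Matrix C C ℝ))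
    (R : Matrix C (F ⊕ C) ℝ) (hR : R = fromCols Z (1 : Matrix C C ℝ))
    (K : Matrix C C ℝ) (hK : K = R * A * P) (hKinv : IsUnit K.det)
    (What : Matrix F C ℝ) (hWhat : What = ((1 : Matrix F F ℝ) - Δ * A_ff) * W - Δ * A_fc)
    (Minv : Matrix (F ⊕ C) (F ⊕ C) ℝ)
    (hMinv : Minv = fromBlocks (1 : Matrix F F ℝ) What 0 (1 : Matrix C C ℝ)
        * fromBlocks Δ 0 0 K⁻¹
        * fromBlocks (1 : Matrix F F ℝ) 0 Z (1 : Matrix C C ℝ))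
    (H : Matrix F F ℝ)
    (hH : H = (1 : Matrix F F ℝ) - Δ * A_ff - What * K⁻¹ * (Z * A_ff + A_cf))
    (J : Matrix C F ℝ) (hJ : J = -(K⁻¹ * (Z * A_ff + A_cf))) :
    (1 : Matrix (F ⊕ C) (F ⊕ C) ℝ) - Minv * A = fromBlocks H (-(H * W)) J (-(J * W)) ∧
    ((1 : Matrix (F ⊕ C) (F ⊕ C) ℝ) - Minv * A) * P = 0 ∧
    ∀ x : (F ⊕ C) → ℝ, ∃ η : F → ℝ,
      ((1 : Matrix (F ⊕ C) (F ⊕ C) ℝ) - Minv * A).mulVec x = (fromRows H J).mulVec η :=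
  two_grid_error_propagation_block_structure_general A_ff A_fc A_cf A_cc W Z Δ A hA P hP R hR K hK
    hKinv What hWhat Minv hMinv H hH J hJ
end

section
/- Suppose A_ff is invertible, set Δ := A_ff⁻¹ (exact F-point solve), and suppose K := R*A*P is invertible. Let E_TG := (fromBlocks (I - Δ*A_ff) (-Δ*A_fc) 0 I) * (I - P*K⁻¹*R*A) be the two-grid error-propagation operator. Then the spectral radius of E_TG equals the spectral radius of (W + A_ff⁻¹*A_fc) * K⁻¹ * (Z*A_ff + A_cf), where spectral radii are computed over ℂ. -/
/-!
With the exact F-solve `Δ = A_ff⁻¹` the F-block of the smoother vanishes, so the two-grid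
operator factors through the coarse space: `E_TG = U * V` with `U = [A_ff⁻¹ A_fc; -1]` and
`V = [K⁻¹ (Z A_ff + A_cf), K⁻¹ (Z A_fc + A_cc) - 1]`. Since `K = (Z A_ff + A_cf) W + Z A_fc + A_cc`,
the reversed product is `V * U = K⁻¹ (Z A_ff + A_cf) (W + A_ff⁻¹ A_fc)`. For rectangular `M`, `N`
the products `M * N` and `N * M` have the same nonzero eigenvalues (`charpoly_mul_comm'`), hence
the same spectral radius; swapping twice gives the claim.
-/

open Matrix

theorem spectralRadius_le_of_forall_ne_zero_mem {𝕜 A B : Type*} [NormedField 𝕜] [Ring A]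
    [Algebra 𝕜 A] [Ring B] [Algebra 𝕜 B] {a : A} {b : B}
    (h : ∀ z : 𝕜, z ≠ 0 → z ∈ spectrum 𝕜 a → z ∈ spectrum 𝕜 b) :
    spectralRadius 𝕜 a ≤ spectralRadius 𝕜 b := by
  refine iSup₂_le fun z hz ↦ ?_
  rcases eq_or_ne z 0 with rfl | hz0
  · simp
  · exact le_iSup₂ (f := fun k (_ : k ∈ spectrum 𝕜 b) ↦ (‖k‖₊ : ENNReal)) z (h z hz0 hz)

namespace Matrix

variable {m n : Type*} [Fintype m] [Fintype n] [DecidableEq m] [DecidableEq n]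

open Polynomial in
theorem mem_spectrum_mul_comm_of_ne_zero {K : Type*} [Field K] (M : Matrix m n K)
    (N : Matrix n m K) {z : K} (hz : z ≠ 0) :
    z ∈ spectrum K (M * N) ↔ z ∈ spectrum K (N * M) := by
  have h := congrArg (fun p ↦ p.eval z = 0) (charpoly_mul_comm' M N)
  simpa [mem_spectrum_iff_isRoot_charpoly, hz] using h

theorem spectralRadius_mul_comm {𝕜 : Type*} [NormedField 𝕜] (M : Matrix m n 𝕜)
    (N : Matrix n m 𝕜) : spectralRadius 𝕜 (M * N) = spectralRadius 𝕜 (N * M) :=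
  le_antisymm
    (spectralRadius_le_of_forall_ne_zero_mem fun _ hz ↦
      (mem_spectrum_mul_comm_of_ne_zero M N hz).1)
    (spectralRadius_le_of_forall_ne_zero_mem fun _ hz ↦
      (mem_spectrum_mul_comm_of_ne_zero N M hz).1)

theorem spectralRadius_map_mul_comm {R 𝕜 : Type*} [NonAssocSemiring R] [NormedField 𝕜]
    (f : R →+* 𝕜) (M : Matrix m n R) (N : Matrix n m R) :
    spectralRadius 𝕜 ((M * N).map f) = spectralRadius 𝕜 ((N * M).map f) := by
  rw [Matrix.map_mul, Matrix.map_mul, spectralRadius_mul_comm]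

variable {R F C : Type*} [Ring R] [Fintype F] [Fintype C] [DecidableEq C]

theorem fromBlocks_mul_one_sub_fromRows_mul_fromCols [DecidableEq F] (X W : Matrix F C R)
    (S D : Matrix C C R) (B : Matrix C F R) :
    fromBlocks 0 (-X) 0 (1 : Matrix C C R)
        * (1 - fromRows W (1 : Matrix C C R) * S * fromCols B D)
      = fromRows X (-1 : Matrix C C R) * fromCols (S * B) (S * D - 1) := by
  rw [fromRows_mul, fromRows_mul_fromCols, ← fromBlocks_one, sub_eq_add_neg, fromBlocks_neg,
    fromBlocks_add, fromBlocks_multiply, fromRows_mul_fromCols]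
  congr 1 <;> simp [Matrix.mul_add, sub_eq_add_neg, add_comm]

theorem fromCols_mul_fromRows_neg_one {X W : Matrix F C R} {S D : Matrix C C R}
    {B : Matrix C F R} (hS : S * (B * W + D) = 1) :
    fromCols (S * B) (S * D - 1) * fromRows X (-1 : Matrix C C R) = S * B * (W + X) := by
  have hSBW : S * B * W = 1 - S * D := by
    rw [eq_sub_iff_add_eq, Matrix.mul_assoc, ← Matrix.mul_add, hS]
  rw [fromCols_mul_fromRows, Matrix.mul_add, hSBW]
  noncomm_ring

end Matrix

theorem two_grid_spectral_radius_exact_F_solve_general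
    {F C : Type*} [Fintype F] [Fintype C] [DecidableEq F] [DecidableEq C]
    (A_ff : Matrix F F ℝ) (A_fc : Matrix F C ℝ) (A_cf : Matrix C F ℝ) (A_cc : Matrix C C ℝ)
    (W : Matrix F C ℝ) (Z : Matrix C F ℝ) (Δ : Matrix F F ℝ)
    (hAff : IsUnit A_ff.det) (hΔ : Δ = A_ff⁻¹)
    (A : Matrix (F ⊕ C) (F ⊕ C) ℝ) (hA : A = fromBlocks A_ff A_fc A_cf A_cc)
    (P : Matrix (F ⊕ C) C ℝ) (hP : P = fromRows W (1 : Matrix C C ℝ))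
    (R : Matrix C (F ⊕ C) ℝ) (hR : R = fromCols Z (1 : Matrix C C ℝ))
    (K : Matrix C C ℝ) (hK : K = R * A * P) (hKinv : IsUnit K.det)
    (E_TG : Matrix (F ⊕ C) (F ⊕ C) ℝ)
    (hE : E_TG = fromBlocks ((1 : Matrix F F ℝ) - Δ * A_ff) (-(Δ * A_fc)) 0 (1 : Matrix C C ℝ)
        * ((1 : Matrix (F ⊕ C) (F ⊕ C) ℝ) - P * K⁻¹ * R * A)) :
    spectralRadius ℂ (E_TG.map (algebraMap ℝ ℂ))
      = spectralRadius ℂ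
          (((W + A_ff⁻¹ * A_fc) * K⁻¹ * (Z * A_ff + A_cf)).map (algebraMap ℝ ℂ)) := by
  set X := A_ff⁻¹ * A_fc
  set B := Z * A_ff + A_cf
  set D := Z * A_fc + A_cc
  have hRA : R * A = fromCols B D := by
    rw [hR, hA, fromCols_mul_fromBlocks, Matrix.one_mul, Matrix.one_mul]
  have hK_blocks : K = B * W + D := by
    rw [hK, hRA, hP, fromCols_mul_fromRows, Matrix.mul_one]
  have hKinv_mul : K⁻¹ * (B * W + D) = 1 := by
    rw [← hK_blocks, nonsing_inv_mul _ hKinv]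
  have hE_factor :
      E_TG = fromRows X (-1 : Matrix C C ℝ) * fromCols (K⁻¹ * B) (K⁻¹ * D - 1) := by
    rw [hE, hΔ, nonsing_inv_mul _ hAff, sub_self, Matrix.mul_assoc _ R, hRA, hP]
    exact fromBlocks_mul_one_sub_fromRows_mul_fromCols ..
  calc spectralRadius ℂ (E_TG.map (algebraMap ℝ ℂ))
      = spectralRadius ℂ
          ((fromCols (K⁻¹ * B) (K⁻¹ * D - 1) * fromRows X (-1 : Matrix C C ℝ)).map
            (algebraMap ℝ ℂ)) := by
        rw [hE_factor, spectralRadius_map_mul_comm]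
    _ = spectralRadius ℂ (((W + X) * (K⁻¹ * B)).map (algebraMap ℝ ℂ)) := by
        rw [fromCols_mul_fromRows_neg_one hKinv_mul, spectralRadius_map_mul_comm]
    _ = _ := by rw [Matrix.mul_assoc]

/-- With the exact F-point solve `Δ = A_ff⁻¹`, the spectral radius of the
two-grid error-propagation operator equals that of
`(W + A_ff⁻¹ A_fc) K⁻¹ (Z A_ff + A_cf)`. -/
theorem two_grid_spectral_radius_exact_F_solve
    {F C : Type*} [Fintype F] [Fintype C] [DecidableEq F] [DecidableEq C]
    [Nonempty F] [Nonempty C]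
    (A_ff : Matrix F F ℝ) (A_fc : Matrix F C ℝ) (A_cf : Matrix C F ℝ) (A_cc : Matrix C C ℝ)
    (W : Matrix F C ℝ) (Z : Matrix C F ℝ) (Δ : Matrix F F ℝ)
    (hAff : IsUnit A_ff.det) (hΔ : Δ = A_ff⁻¹)
    (A : Matrix (F ⊕ C) (F ⊕ C) ℝ) (hA : A = fromBlocks A_ff A_fc A_cf A_cc)
    (P : Matrix (F ⊕ C) C ℝ) (hP : P = fromRows W (1 : Matrix C C ℝ))
    (R : Matrix C (F ⊕ C) ℝ) (hR : R = fromCols Z (1 : Matrix C C ℝ))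
    (K : Matrix C C ℝ) (hK : K = R * A * P) (hKinv : IsUnit K.det)
    (E_TG : Matrix (F ⊕ C) (F ⊕ C) ℝ)
    (hE : E_TG = fromBlocks ((1 : Matrix F F ℝ) - Δ * A_ff) (-(Δ * A_fc)) 0 (1 : Matrix C C ℝ)
        * ((1 : Matrix (F ⊕ C) (F ⊕ C) ℝ) - P * K⁻¹ * R * A)) :
    spectralRadius ℂ (E_TG.map (algebraMap ℝ ℂ))
      = spectralRadius ℂ
          (((W + A_ff⁻¹ * A_fc) * K⁻¹ * (Z * A_ff + A_cf)).map (algebraMap ℝ ℂ)) :=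
  two_grid_spectral_radius_exact_F_solve_general A_ff A_fc A_cf A_cc W Z Δ hAff hΔ A hA P hP R hR K
    hK hKinv E_TG hE
end

section
/- Suppose A_ff is invertible and K := R*A*P is invertible, and let Δ : Matrix F F ℝ. Define G := (I - Δ*A_ff) + Δ*(A_ff*W + A_fc)*K⁻¹*(Z*A_ff + A_cf). If the interpolation is ideal (W = -A_ff⁻¹*A_fc) or the restriction is ideal (Z = -A_cf*A_ff⁻¹), then G = I - Δ*A_ff. Consequently, if additionally Δ = A_ff⁻¹, then the two-grid error-propagation operator E_TG := (fromBlocks (I - Δ*A_ff) (-Δ*A_fc) 0 I) * (I - P*K⁻¹*R*A) has spectral radius zero. -/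
open Matrix

/-! Ideal interpolation (restriction) makes the factor `A_ff W + A_fc` (`Z A_ff + A_cf`) of
the correction term in `G` vanish. With an exact F-solve the smoother is `S = P̂ E`, where
`P̂ = [-A_ff⁻¹ A_fc; I]` is the ideal interpolation and `E = [0, I]` selects the C-variables,
while the coarse-grid correction `T = I - P K⁻¹ R A` annihilates the range of `P`. Ideal
interpolation gives `P = P̂`, so `T S = 0` and `(S T)² = 0`. Ideal restriction gives
`R A = K E`, hence `T = I - P E` and `S T = P̂ E - P̂ (E P) E = 0` because `E P = I`. In both
cases `S T` is nilpotent. -/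

theorem spectralRadius_eq_zero_of_isNilpotent {𝕜 A : Type*} [NormedField 𝕜] [Ring A]
    [Algebra 𝕜 A] {a : A} (ha : IsNilpotent a) : spectralRadius 𝕜 a = 0 := by
  obtain ⟨n, hn⟩ := ha
  have h := spectrum.spectralRadius_pow_le (𝕜 := 𝕜) a (n + 1) n.succ_ne_zero
  rw [pow_succ a, hn, zero_mul, spectrum.spectralRadius_zero] at h
  exact (pow_eq_zero_iff n.succ_ne_zero).mp (le_zero_iff.mp h)

theorem isNilpotent_mul_of_mul_eq_zero {R : Type*} [Semiring R] {a b : R} (h : b * a = 0) :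
    IsNilpotent (a * b) :=
  ⟨2, by rw [sq, mul_assoc, ← mul_assoc b, h, zero_mul, mul_zero]⟩

namespace Matrix

variable {α : Type*} [CommRing α] {F C : Type*}

theorem mul_add_eq_zero_of_eq_neg_inv_mul [Fintype F] [DecidableEq F] {A : Matrix F F α}
    {B W : Matrix F C α} (hA : IsUnit A.det) (hW : W = -(A⁻¹ * B)) : A * W + B = 0 := by
  rw [hW, Matrix.mul_neg, ← Matrix.mul_assoc, mul_nonsing_inv _ hA, Matrix.one_mul,
    neg_add_cancel]

theorem mul_add_eq_zero_of_eq_neg_mul_inv [Fintype F] [DecidableEq F] {A : Matrix F F α}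
    {B Z : Matrix C F α} (hA : IsUnit A.det) (hZ : Z = -(B * A⁻¹)) : Z * A + B = 0 := by
  rw [hZ, Matrix.neg_mul, Matrix.mul_assoc, nonsing_inv_mul _ hA, Matrix.mul_one,
    neg_add_cancel]

theorem one_sub_coarse_correction_mul_self_eq_zero {N : Type*} [Fintype N] [DecidableEq N]
    [Fintype C] [DecidableEq C] (P : Matrix N C α) (R : Matrix C N α) (A : Matrix N N α)
    (hK : IsUnit (R * A * P).det) : (1 - P * (R * A * P)⁻¹ * R * A) * P = 0 := by
  have hPKRAP : P * (R * A * P)⁻¹ * R * A * P = P := by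
    rw [Matrix.mul_assoc _ A, Matrix.mul_assoc _ R, Matrix.mul_assoc P, ← Matrix.mul_assoc R,
      nonsing_inv_mul _ hK, Matrix.mul_one]
  rw [Matrix.sub_mul, Matrix.one_mul, hPKRAP, sub_self]

theorem fromCols_zero_one_mul_fromRows_one [Fintype F] [Fintype C] [DecidableEq C]
    (W : Matrix F C α) :
    fromCols (0 : Matrix C F α) (1 : Matrix C C α) * fromRows W (1 : Matrix C C α) = 1 := by
  simp [fromCols_mul_fromRows]

theorem fromBlocks_one_sub_inv_mul_self [Fintype F] [DecidableEq F] [Fintype C] [DecidableEq C]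
    {A_ff : Matrix F F α} (hA : IsUnit A_ff.det) (A_fc : Matrix F C α) :
    fromBlocks (1 - A_ff⁻¹ * A_ff) (-(A_ff⁻¹ * A_fc)) 0 (1 : Matrix C C α) =
      fromRows (-(A_ff⁻¹ * A_fc)) (1 : Matrix C C α) *
        fromCols (0 : Matrix C F α) (1 : Matrix C C α) := by
  rw [nonsing_inv_mul _ hA, sub_self, fromRows_mul_fromCols]
  simp

theorem fromCols_mul_fromBlocks_eq_galerkin_mul [Fintype F] [Fintype C] [DecidableEq C]
    {Z : Matrix C F α} {A_ff : Matrix F F α} {A_cf : Matrix C F α} (hZ : Z * A_ff + A_cf = 0)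
    (A_fc : Matrix F C α) (A_cc : Matrix C C α) (W : Matrix F C α) :
    fromCols Z (1 : Matrix C C α) * fromBlocks A_ff A_fc A_cf A_cc =
      (fromCols Z (1 : Matrix C C α) * fromBlocks A_ff A_fc A_cf A_cc *
        fromRows W (1 : Matrix C C α)) * fromCols (0 : Matrix C F α) (1 : Matrix C C α) := by
  rw [fromCols_mul_fromBlocks, Matrix.one_mul, Matrix.one_mul, hZ, fromCols_mul_fromRows,
    mul_fromCols]
  simp

theorem isNilpotent_mul_coarse_correction_of_interp {N : Type*} [Fintype N] [DecidableEq N]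
    [Fintype C] [DecidableEq C] (P : Matrix N C α) (E : Matrix C N α) (R : Matrix C N α)
    (A : Matrix N N α) (hK : IsUnit (R * A * P).det) :
    IsNilpotent (P * E * (1 - P * (R * A * P)⁻¹ * R * A)) :=
  isNilpotent_mul_of_mul_eq_zero <| by
    rw [← Matrix.mul_assoc, one_sub_coarse_correction_mul_self_eq_zero P R A hK, Matrix.zero_mul]

theorem mul_coarse_correction_eq_zero_of_mul_eq_galerkin_mul {N : Type*} [Fintype N]
    [DecidableEq N] [Fintype C] [DecidableEq C] (Q P : Matrix N C α) (E R : Matrix C N α)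
    (A : Matrix N N α) (hEP : E * P = 1) (hRA : R * A = R * A * P * E)
    (hK : IsUnit (R * A * P).det) : Q * E * (1 - P * (R * A * P)⁻¹ * R * A) = 0 := by
  have hPE : P * (R * A * P)⁻¹ * R * A = P * E :=
    calc P * (R * A * P)⁻¹ * R * A = P * (R * A * P)⁻¹ * (R * A) := Matrix.mul_assoc _ _ _
      _ = P * (R * A * P)⁻¹ * (R * A * P * E) := congrArg (P * (R * A * P)⁻¹ * ·) hRA
      _ = P * E := by
        rw [← Matrix.mul_assoc, Matrix.mul_assoc P, nonsing_inv_mul _ hK, Matrix.mul_one]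
  rw [hPE, Matrix.mul_sub, Matrix.mul_one, Matrix.mul_assoc Q, ← Matrix.mul_assoc E, hEP,
    Matrix.one_mul, sub_self]

end Matrix

theorem two_grid_ideal_transfer_spectral_radius_zero_general
    {F C : Type*} [Fintype F] [Fintype C] [DecidableEq F] [DecidableEq C]
    (A_ff : Matrix F F ℝ) (A_fc : Matrix F C ℝ) (A_cf : Matrix C F ℝ) (A_cc : Matrix C C ℝ)
    (W : Matrix F C ℝ) (Z : Matrix C F ℝ) (Δ : Matrix F F ℝ)
    (hAff : IsUnit A_ff.det)
    (A : Matrix (F ⊕ C) (F ⊕ C) ℝ) (hA : A = fromBlocks A_ff A_fc A_cf A_cc)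
    (P : Matrix (F ⊕ C) C ℝ) (hP : P = fromRows W (1 : Matrix C C ℝ))
    (R : Matrix C (F ⊕ C) ℝ) (hR : R = fromCols Z (1 : Matrix C C ℝ))
    (K : Matrix C C ℝ) (hK : K = R * A * P) (hKinv : IsUnit K.det)
    (G : Matrix F F ℝ)
    (hG : G = ((1 : Matrix F F ℝ) - Δ * A_ff)
        + Δ * (A_ff * W + A_fc) * K⁻¹ * (Z * A_ff + A_cf))
    (hideal : W = -(A_ff⁻¹ * A_fc) ∨ Z = -(A_cf * A_ff⁻¹)) :
    G = (1 : Matrix F F ℝ) - Δ * A_ff ∧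
    (Δ = A_ff⁻¹ →
      spectralRadius ℂ
        ((fromBlocks ((1 : Matrix F F ℝ) - Δ * A_ff) (-(Δ * A_fc)) 0 (1 : Matrix C C ℝ)
          * ((1 : Matrix (F ⊕ C) (F ⊕ C) ℝ) - P * K⁻¹ * R * A)).map (algebraMap ℝ ℂ))
        = 0) := by
  refine ⟨?_, fun hΔ => ?_⟩
  · rcases hideal with hW | hZ
    · rw [hG, mul_add_eq_zero_of_eq_neg_inv_mul hAff hW]
      simp
    · rw [hG, mul_add_eq_zero_of_eq_neg_mul_inv hAff hZ]
      simp
  subst hΔ hK hA hP hR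
  rw [fromBlocks_one_sub_inv_mul_self hAff]
  refine spectralRadius_eq_zero_of_isNilpotent (IsNilpotent.map ?_ (algebraMap ℝ ℂ).mapMatrix)
  rcases hideal with hW | hZ
  · subst hW
    exact isNilpotent_mul_coarse_correction_of_interp _ _ _ _ hKinv
  · rw [mul_coarse_correction_eq_zero_of_mul_eq_galerkin_mul _ _ _ _ _
      (fromCols_zero_one_mul_fromRows_one W)
      (fromCols_mul_fromBlocks_eq_galerkin_mul (mul_add_eq_zero_of_eq_neg_mul_inv hAff hZ)
        A_fc A_cc W) hKinv]
    exact IsNilpotent.zero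

/-- If interpolation or restriction is ideal, then
`G = (I - Δ A_ff) + Δ (A_ff W + A_fc) K⁻¹ (Z A_ff + A_cf)` reduces to
`I - Δ A_ff`; consequently, with the exact F-solve `Δ = A_ff⁻¹`, the two-grid
error-propagation operator has spectral radius zero. -/
theorem two_grid_ideal_transfer_spectral_radius_zero
    {F C : Type*} [Fintype F] [Fintype C] [DecidableEq F] [DecidableEq C]
    [Nonempty F] [Nonempty C]
    (A_ff : Matrix F F ℝ) (A_fc : Matrix F C ℝ) (A_cf : Matrix C F ℝ) (A_cc : Matrix C C ℝ)
    (W : Matrix F C ℝ) (Z : Matrix C F ℝ) (Δ : Matrix F F ℝ)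
    (hAff : IsUnit A_ff.det)
    (A : Matrix (F ⊕ C) (F ⊕ C) ℝ) (hA : A = fromBlocks A_ff A_fc A_cf A_cc)
    (P : Matrix (F ⊕ C) C ℝ) (hP : P = fromRows W (1 : Matrix C C ℝ))
    (R : Matrix C (F ⊕ C) ℝ) (hR : R = fromCols Z (1 : Matrix C C ℝ))
    (K : Matrix C C ℝ) (hK : K = R * A * P) (hKinv : IsUnit K.det)
    (G : Matrix F F ℝ)
    (hG : G = ((1 : Matrix F F ℝ) - Δ * A_ff)
        + Δ * (A_ff * W + A_fc) * K⁻¹ * (Z * A_ff + A_cf))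
    (hideal : W = -(A_ff⁻¹ * A_fc) ∨ Z = -(A_cf * A_ff⁻¹)) :
    G = (1 : Matrix F F ℝ) - Δ * A_ff ∧
    (Δ = A_ff⁻¹ →
      spectralRadius ℂ
        ((fromBlocks ((1 : Matrix F F ℝ) - Δ * A_ff) (-(Δ * A_fc)) 0 (1 : Matrix C C ℝ)
          * ((1 : Matrix (F ⊕ C) (F ⊕ C) ℝ) - P * K⁻¹ * R * A)).map (algebraMap ℝ ℂ))
        = 0) :=
  two_grid_ideal_transfer_spectral_radius_zero_general A_ff A_fc A_cf A_cc W Z Δ hAff A hA P hP R hR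
    K hK hKinv G hG hideal
end
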